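/- arXiv:2310.04548 — 7 statements merged into one kernel-verified Lean document; each statement's English description precedes it below -/
import Mathlib

section
/- For every p with 1 ≤ p < ∞, the ℓ_p norm on ℝ_{\geq 0}^n, x ↦ (Σ_i x_i^p)^{1/p}, is continuously submodular. -/
/-- Continuous submodularity on the nonnegative orthant. -/
def ContSubmodular {n : ℕ} (f : (Fin n → ℝ) → ℝ) : Prop :=
  ∀ x y : Fin n → ℝ, (∀ i, 0 ≤ x i) → (∀ i, 0 ≤ y i) →
    f (x ⊔ y) + f (x ⊓ y) ≤ f x + f y

private lemma key_antitone {r δ : ℝ} (hr0 : 0 < r) (hr1 : r ≤ 1) (hδ : 0 ≤ δ) :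
    AntitoneOn (fun t : ℝ => (t + δ) ^ r - t ^ r) (Set.Ici 0) := by
  apply antitoneOn_of_deriv_nonpos (convex_Ici 0)
  · apply ContinuousOn.sub
    · exact (continuousOn_id.add continuousOn_const).rpow_const
        (fun t _ => Or.inr hr0.le)
    · exact continuousOn_id.rpow_const (fun t _ => Or.inr hr0.le)
  · intro t ht
    rw [interior_Ici] at ht
    have h1 : HasDerivAt (fun t : ℝ => (t + δ) ^ r - t ^ r)
        (r * (t + δ) ^ (r - 1) * 1 - r * t ^ (r - 1)) t := by
      exact ((Real.hasDerivAt_rpow_const (Or.inl (ne_of_gt (by have := Set.mem_Ioi.mp ht; linarith : (0:ℝ) < t + δ)))).comp t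
        ((hasDerivAt_id t).add_const δ)).sub
        (Real.hasDerivAt_rpow_const (Or.inl (ne_of_gt ht)))
    exact h1.differentiableAt.differentiableWithinAt
  · intro t ht
    rw [interior_Ici] at ht
    have h1 : HasDerivAt (fun t : ℝ => (t + δ) ^ r - t ^ r)
        (r * (t + δ) ^ (r - 1) * 1 - r * t ^ (r - 1)) t := by
      exact ((Real.hasDerivAt_rpow_const (Or.inl (ne_of_gt (by have := Set.mem_Ioi.mp ht; linarith : (0:ℝ) < t + δ)))).comp t
        ((hasDerivAt_id t).add_const δ)).sub
        (Real.hasDerivAt_rpow_const (Or.inl (ne_of_gt ht)))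
    rw [h1.deriv]
    have h2 : (t + δ) ^ (r - 1) ≤ t ^ (r - 1) :=
      Real.rpow_le_rpow_of_nonpos ht (by linarith) (by linarith)
    nlinarith [mul_le_mul_of_nonneg_left h2 hr0.le]

private lemma key_ineq {r δ b c : ℝ} (hr0 : 0 < r) (hr1 : r ≤ 1) (hδ : 0 ≤ δ)
    (hb : 0 ≤ b) (hbc : b ≤ c) :
    (c + δ) ^ r - c ^ r ≤ (b + δ) ^ r - b ^ r :=
  key_antitone hr0 hr1 hδ (Set.mem_Ici.2 hb) (Set.mem_Ici.2 (hb.trans hbc)) hbc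

theorem lp_norm_submodular {n : ℕ} (p : ℝ) (hp : 1 ≤ p) :
    ContSubmodular (fun x : Fin n → ℝ => (∑ i, x i ^ p) ^ (1 / p)) := by
  intro x y hx hy
  have hp0 : 0 < p := lt_of_lt_of_le one_pos hp
  set r : ℝ := 1 / p with hr
  have hr0 : 0 < r := by positivity
  have hr1 : r ≤ 1 := by rw [hr, div_le_one hp0]; exact hp
  set A : ℝ := ∑ i, (x ⊔ y) i ^ p with hA
  set B : ℝ := ∑ i, (x ⊓ y) i ^ p with hB
  set C : ℝ := ∑ i, x i ^ p with hC
  set D : ℝ := ∑ i, y i ^ p with hD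
  have hsum : A + B = C + D := by
    rw [hA, hB, hC, hD, ← Finset.sum_add_distrib, ← Finset.sum_add_distrib]
    apply Finset.sum_congr rfl
    intro i _
    simp only [Pi.sup_apply, Pi.inf_apply]
    rcases le_total (x i) (y i) with h | h
    · rw [sup_eq_right.2 h, inf_eq_left.2 h]; ring
    · rw [sup_eq_left.2 h, inf_eq_right.2 h]
  have hCA : C ≤ A := by
    apply Finset.sum_le_sum
    intro i _
    exact Real.rpow_le_rpow (hx i) (le_sup_left) hp0.le
  have hDA : D ≤ A := by
    apply Finset.sum_le_sum
    intro i _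
    exact Real.rpow_le_rpow (hy i) (le_sup_right) hp0.le
  have hBpos : 0 ≤ B := by
    apply Finset.sum_nonneg
    intro i _
    exact Real.rpow_nonneg (le_inf (hx i) (hy i)) p
  have hBC : B ≤ C := by linarith
  have hkey := key_ineq (δ := A - C) (b := B) (c := C) hr0 hr1 (by linarith) hBpos hBC
  have e1 : C + (A - C) = A := by ring
  have e2 : B + (A - C) = D := by linarith
  rw [e1, e2] at hkey
  simp only
  linarith
end

section
/- For any fixed descending weights a_1 ≥ a_2 ≥ ... ≥ a_n ≥ 0, the ordered norm ‖x‖ = Σ_i a_i x_i^↓ (where x^↓ is the vector x sorted in descending order) is continuously submodular on ℝ_{\geq 0}^n. -/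
/-- The descending rearrangement `x^↓` of a vector `x`. -/
noncomputable def sortDesc {n : ℕ} (x : Fin n → ℝ) : Fin n → ℝ :=
  fun i => x (Tuple.sort x i.rev)

namespace OrderedNormAux

variable {n : ℕ}

noncomputable def W (x : Fin n → ℝ) (i : ℕ) : ℝ :=
  if h : i < n then sortDesc x ⟨i, h⟩ else 0

noncomputable def Sk (x : Fin n → ℝ) (k : ℕ) : ℝ :=
  ∑ i ∈ Finset.range k, W x i

lemma antitone_sortDesc (x : Fin n → ℝ) : Antitone (sortDesc x) := by
  intro i j hij
  exact Tuple.monotone_sort x (Fin.rev_le_rev.mpr hij)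

lemma strictMono_le {k : ℕ} (g : Fin k → Fin n) (hg : StrictMono g) :
    ∀ m : ℕ, ∀ i : Fin k, (i : ℕ) = m → m ≤ (g i : ℕ) := by
  intro m
  induction m with
  | zero => intro i _; exact Nat.zero_le _
  | succ m ih =>
    intro i hi
    have hm : m < k := by omega
    have h1 : (⟨m, hm⟩ : Fin k) < i := by
      simp [Fin.lt_def, hi]
    have h2 := hg h1
    have h3 := ih ⟨m, hm⟩ rfl
    have := Fin.lt_def.mp h2
    omega

/-- Sum of an antitone function over a finset is at most the sum over the first
`card` indices. -/
lemma sum_antitone_le (w : Fin n → ℝ) (hw : Antitone w) (S : Finset (Fin n)) :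
    ∑ i ∈ S, w i ≤ ∑ i ∈ Finset.range S.card, (if h : i < n then w ⟨i, h⟩ else 0) := by
  set k := S.card with hk
  have hkn : k ≤ n := by
    simpa using S.card_le_univ
  have e : Fin k ↪o Fin n := S.orderEmbOfFin hk.symm
  -- S is the image of univ under the embedding
  have himg : Finset.univ.image (S.orderEmbOfFin hk.symm) = S := by
    apply Finset.eq_of_subset_of_card_le
    · intro j hj
      simp only [Finset.mem_image] at hj
      obtain ⟨i, _, rfl⟩ := hj
      exact Finset.orderEmbOfFin_mem S hk.symm i
    · rw [Finset.card_image_of_injective _ (S.orderEmbOfFin hk.symm).injective]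
      simp [hk]
  have h1 : ∑ i ∈ S, w i = ∑ i : Fin k, w (S.orderEmbOfFin hk.symm i) :=
    (Finset.sum_congr himg.symm fun _ _ => rfl).trans
      (Finset.sum_image fun a _ b _ hab => (S.orderEmbOfFin hk.symm).injective hab)
  rw [h1, Finset.sum_range]
  apply Finset.sum_le_sum
  intro i _
  have hin : (i : ℕ) < n := lt_of_lt_of_le i.2 hkn
  rw [dif_pos hin]
  apply hw
  have := strictMono_le (S.orderEmbOfFin hk.symm) (S.orderEmbOfFin hk.symm).strictMono
    (i : ℕ) i rfl
  exact Fin.mk_le_of_le_val this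

lemma sortDesc_apply (x : Fin n → ℝ) (i : Fin n) :
    sortDesc x ((Tuple.sort x).symm i).rev = x i := by
  simp [sortDesc, Fin.rev_rev]

lemma sum_le_Sk (x : Fin n → ℝ) (S : Finset (Fin n)) :
    ∑ i ∈ S, x i ≤ Sk x S.card := by
  classical
  set τ : Equiv.Perm (Fin n) := (Tuple.sort x).symm.trans (Fin.revPerm) with hτ
  have hxi : ∀ i, x i = sortDesc x (τ i) := by
    intro i
    rw [← sortDesc_apply x i]
    rfl
  have h1 : ∑ i ∈ S, x i = ∑ j ∈ S.image τ, sortDesc x j := by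
    rw [Finset.sum_image (fun a _ b _ hab => τ.injective hab)]
    exact Finset.sum_congr rfl fun i _ => hxi i
  have hcard : (S.image τ).card = S.card := Finset.card_image_of_injective _ τ.injective
  rw [h1]
  have := sum_antitone_le (sortDesc x) (antitone_sortDesc x) (S.image τ)
  rw [hcard] at this
  exact this

lemma exists_achieving (x : Fin n → ℝ) (k : ℕ) (hk : k ≤ n) :
    ∃ S : Finset (Fin n), S.card = k ∧ ∑ i ∈ S, x i = Sk x k := by
  classical
  set g : Fin k → Fin n := fun i => Tuple.sort x (Fin.rev ⟨(i : ℕ), lt_of_lt_of_le i.2 hk⟩)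
    with hg
  have hginj : Function.Injective g := by
    intro a b hab
    have := (Tuple.sort x).injective hab
    have := Fin.rev_injective this
    simpa [Fin.ext_iff] using congrArg Fin.val this
  refine ⟨Finset.univ.image g, ?_, ?_⟩
  · rw [Finset.card_image_of_injective _ hginj]; simp
  · rw [Finset.sum_image (fun a _ b _ hab => hginj hab)]
    rw [Sk, Finset.sum_range]
    apply Finset.sum_congr rfl
    intro i _
    have hin : (i : ℕ) < n := lt_of_lt_of_le i.2 hk
    rw [W, dif_pos hin]
    rfl

lemma exchange (x y : Fin n → ℝ) (k : ℕ) (S T : Finset (Fin n))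
    (hS : S.card = k) (hT : T.card = k) :
    ∑ i ∈ S, (x ⊔ y) i + ∑ i ∈ T, (x ⊓ y) i ≤ Sk x k + Sk y k := by
  classical
  set A : Finset (Fin n) := (S \ T).filter (fun i => y i ≤ x i) with hA
  set B : Finset (Fin n) := (S \ T).filter (fun i => ¬ y i ≤ x i) with hB
  have hAB : A.card + B.card = (S \ T).card := Finset.card_filter_add_card_filter_not _
  have hsd : (S \ T).card = (T \ S).card := Finset.card_sdiff_comm (hS.trans hT.symm)
  have hBle : B.card ≤ (T \ S).card := by
    have : B ⊆ S \ T := Finset.filter_subset _ _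
    have := Finset.card_le_card this
    omega
  obtain ⟨C, hCsub, hCcard⟩ := Finset.exists_subset_card_eq hBle
  set D : Finset (Fin n) := (T \ S) \ C with hD
  have hDcard : D.card = (T \ S).card - B.card := by
    rw [hD, Finset.card_sdiff_of_subset hCsub, hCcard]
  -- basic subset facts
  have hAsub : A ⊆ S \ T := Finset.filter_subset _ _
  have hBsub : B ⊆ S \ T := Finset.filter_subset _ _
  have hCsub' : C ⊆ T \ S := hCsub
  have hDsub : D ⊆ T \ S := Finset.sdiff_subset
  -- disjointness
  have hdIA : Disjoint (S ∩ T) A := by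
    refine Finset.disjoint_left.mpr ?_
    intro i hi hia
    have := hAsub hia
    simp only [Finset.mem_sdiff] at this
    simp only [Finset.mem_inter] at hi
    exact this.2 hi.2
  have hdIB : Disjoint (S ∩ T) B := by
    refine Finset.disjoint_left.mpr ?_
    intro i hi hib
    have := hBsub hib
    simp only [Finset.mem_sdiff] at this
    simp only [Finset.mem_inter] at hi
    exact this.2 hi.2
  have hdIC : Disjoint (S ∩ T) C := by
    refine Finset.disjoint_left.mpr ?_
    intro i hi hic
    have := hCsub' hic
    simp only [Finset.mem_sdiff] at this
    simp only [Finset.mem_inter] at hi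
    exact this.2 hi.1
  have hdID : Disjoint (S ∩ T) D := by
    refine Finset.disjoint_left.mpr ?_
    intro i hi hid
    have := hDsub hid
    simp only [Finset.mem_sdiff] at this
    simp only [Finset.mem_inter] at hi
    exact this.2 hi.1
  have hdAC : Disjoint A C := by
    refine Finset.disjoint_left.mpr ?_
    intro i hia hic
    have h1 := hAsub hia
    have h2 := hCsub' hic
    simp only [Finset.mem_sdiff] at h1 h2
    exact h1.2 h2.1
  have hdBD : Disjoint B D := by
    refine Finset.disjoint_left.mpr ?_
    intro i hib hid
    have h1 := hBsub hib
    have h2 := hDsub hid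
    simp only [Finset.mem_sdiff] at h1 h2
    exact h1.2 h2.1
  -- the competitor sets
  set S' : Finset (Fin n) := (S ∩ T) ∪ A ∪ C with hS'
  set T' : Finset (Fin n) := (S ∩ T) ∪ B ∪ D with hT'
  have hScard : (S ∩ T).card + (S \ T).card = k := by
    rw [← hS]; exact Finset.card_inter_add_card_sdiff S T
  have hTcard : (S ∩ T).card + (T \ S).card = k := by
    have := Finset.card_inter_add_card_sdiff T S
    rw [hT, Finset.inter_comm] at this
    exact this
  have hS'card : S'.card = k := by
    rw [hS', Finset.card_union_of_disjoint, Finset.card_union_of_disjoint hdIA, hCcard]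
    · omega
    · exact Finset.disjoint_union_left.mpr ⟨hdIC, hdAC⟩
  have hT'card : T'.card = k := by
    rw [hT', Finset.card_union_of_disjoint, Finset.card_union_of_disjoint hdIB, hDcard]
    · omega
    · exact Finset.disjoint_union_left.mpr ⟨hdID, hdBD⟩
  -- sum decompositions
  have hsplitS := Finset.sum_filter_add_sum_filter_not (S \ T) (fun i => y i ≤ x i) (x ⊔ y)
  have hS2 := Finset.sum_inter_add_sum_sdiff S T (x ⊔ y)
  have hsumS : ∑ i ∈ S, (x ⊔ y) i
      = ∑ i ∈ S ∩ T, (x ⊔ y) i + (∑ i ∈ A, (x ⊔ y) i + ∑ i ∈ B, (x ⊔ y) i) := by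
    rw [← hS2, ← hsplitS]
  have hsplitT : ∑ i ∈ T \ S, (x ⊓ y) i = ∑ i ∈ C, (x ⊓ y) i + ∑ i ∈ D, (x ⊓ y) i := by
    rw [hD, add_comm]
    exact (Finset.sum_sdiff hCsub).symm
  have hT2 := Finset.sum_inter_add_sum_sdiff T S (x ⊓ y)
  rw [Finset.inter_comm] at hT2
  have hsumT : ∑ i ∈ T, (x ⊓ y) i
      = ∑ i ∈ S ∩ T, (x ⊓ y) i + (∑ i ∈ C, (x ⊓ y) i + ∑ i ∈ D, (x ⊓ y) i) := by
    rw [← hT2, ← hsplitT]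
  -- pointwise facts
  have hInt : ∑ i ∈ S ∩ T, (x ⊔ y) i + ∑ i ∈ S ∩ T, (x ⊓ y) i
      = ∑ i ∈ S ∩ T, x i + ∑ i ∈ S ∩ T, y i := by
    rw [← Finset.sum_add_distrib, ← Finset.sum_add_distrib]
    apply Finset.sum_congr rfl
    intro i _
    have : (x ⊔ y) i + (x ⊓ y) i = x i + y i := by
      simp only [Pi.sup_apply, Pi.inf_apply]
      exact max_add_min (x i) (y i)
    exact this
  have hAx : ∑ i ∈ A, (x ⊔ y) i = ∑ i ∈ A, x i := by
    apply Finset.sum_congr rfl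
    intro i hi
    have := (Finset.mem_filter.mp hi).2
    simp only [Pi.sup_apply]
    exact sup_eq_left.mpr this
  have hBy : ∑ i ∈ B, (x ⊔ y) i = ∑ i ∈ B, y i := by
    apply Finset.sum_congr rfl
    intro i hi
    have := (Finset.mem_filter.mp hi).2
    simp only [Pi.sup_apply]
    exact sup_eq_right.mpr (le_of_not_ge this)
  have hCx : ∑ i ∈ C, (x ⊓ y) i ≤ ∑ i ∈ C, x i :=
    Finset.sum_le_sum fun i _ => inf_le_left
  have hDy : ∑ i ∈ D, (x ⊓ y) i ≤ ∑ i ∈ D, y i :=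
    Finset.sum_le_sum fun i _ => inf_le_right
  -- competitor sums
  have hS'sum : ∑ i ∈ S', x i = ∑ i ∈ S ∩ T, x i + ∑ i ∈ A, x i + ∑ i ∈ C, x i := by
    rw [hS', Finset.sum_union (Finset.disjoint_union_left.mpr ⟨hdIC, hdAC⟩),
      Finset.sum_union hdIA]
  have hT'sum : ∑ i ∈ T', y i = ∑ i ∈ S ∩ T, y i + ∑ i ∈ B, y i + ∑ i ∈ D, y i := by
    rw [hT', Finset.sum_union (Finset.disjoint_union_left.mpr ⟨hdID, hdBD⟩),
      Finset.sum_union hdIB]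
  have hfinal1 : ∑ i ∈ S', x i ≤ Sk x k := by
    have := sum_le_Sk x S'
    rwa [hS'card] at this
  have hfinal2 : ∑ i ∈ T', y i ≤ Sk y k := by
    have := sum_le_Sk y T'
    rwa [hT'card] at this
  linarith [hsumS, hsumT, hInt, hAx, hBy, hCx, hDy, hS'sum, hT'sum, hfinal1, hfinal2]

lemma Sk_submodular (x y : Fin n → ℝ) (k : ℕ) (hk : k ≤ n) :
    Sk (x ⊔ y) k + Sk (x ⊓ y) k ≤ Sk x k + Sk y k := by
  obtain ⟨S, hScard, hSsum⟩ := exists_achieving (x ⊔ y) k hk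
  obtain ⟨T, hTcard, hTsum⟩ := exists_achieving (x ⊓ y) k hk
  rw [← hSsum, ← hTsum]
  exact exchange x y k S T hScard hTcard

end OrderedNormAux

open OrderedNormAux in
theorem ordered_norm_submodular {n : ℕ} (a : Fin n → ℝ)
    (ha_nonneg : ∀ i, 0 ≤ a i) (ha_anti : Antitone a) :
    ContSubmodular (fun x : Fin n → ℝ => ∑ i, a i * sortDesc x i) := by
  classical
  intro x y _ _
  simp only
  -- extend the weights by zero
  set A : ℕ → ℝ := fun i => if h : i < n then a ⟨i, h⟩ else 0 with hAdef
  have hrepr : ∀ z : Fin n → ℝ, ∑ i, a i * sortDesc z i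
      = A (n - 1) * Sk z n - ∑ i ∈ Finset.range (n - 1), (A (i + 1) - A i) * Sk z (i + 1) := by
    intro z
    have h1 : ∑ i, a i * sortDesc z i = ∑ i ∈ Finset.range n, A i * W z i := by
      rw [Finset.sum_range]
      apply Finset.sum_congr rfl
      intro i _
      rw [hAdef]
      simp only [W, dif_pos i.2]
    rw [h1]
    have := Finset.sum_range_by_parts A (W z) n
    simpa [Sk, smul_eq_mul] using this
  rw [hrepr (x ⊔ y), hrepr (x ⊓ y), hrepr x, hrepr y]
  have hAtop : 0 ≤ A (n - 1) := by
    show (0 : ℝ) ≤ if h : n - 1 < n then a ⟨n - 1, h⟩ else 0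
    split_ifs with h
    · exact ha_nonneg _
    · exact le_refl 0
  have hAstep : ∀ i ∈ Finset.range (n - 1), A (i + 1) - A i ≤ 0 := by
    intro i hi
    rw [Finset.mem_range] at hi
    have h1 : i + 1 < n := by omega
    have h2 : i < n := by omega
    rw [hAdef]
    simp only [dif_pos h1, dif_pos h2]
    have : a ⟨i + 1, h1⟩ ≤ a ⟨i, h2⟩ := ha_anti (by simp [Fin.le_def])
    linarith
  have htop := Sk_submodular x y n le_rfl
  have htop' : A (n - 1) * (Sk (x ⊔ y) n + Sk (x ⊓ y) n)
      ≤ A (n - 1) * (Sk x n + Sk y n) := mul_le_mul_of_nonneg_left htop hAtop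
  have hsum : ∑ i ∈ Finset.range (n - 1), (A (i + 1) - A i) * (Sk x (i + 1) + Sk y (i + 1))
      ≤ ∑ i ∈ Finset.range (n - 1),
        (A (i + 1) - A i) * (Sk (x ⊔ y) (i + 1) + Sk (x ⊓ y) (i + 1)) := by
    apply Finset.sum_le_sum
    intro i hi
    have h1 : i + 1 ≤ n := by
      rw [Finset.mem_range] at hi; omega
    exact mul_le_mul_of_nonpos_left (Sk_submodular x y (i + 1) h1) (hAstep i hi)
  have e1 : ∀ u v : Fin n → ℝ,
      ∑ i ∈ Finset.range (n - 1), (A (i + 1) - A i) * Sk u (i + 1)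
      + ∑ i ∈ Finset.range (n - 1), (A (i + 1) - A i) * Sk v (i + 1)
      = ∑ i ∈ Finset.range (n - 1), (A (i + 1) - A i) * (Sk u (i + 1) + Sk v (i + 1)) := by
    intro u v
    rw [← Finset.sum_add_distrib]
    exact Finset.sum_congr rfl fun i _ => (mul_add _ _ _).symm
  have e2 := e1 (x ⊔ y) (x ⊓ y)
  have e3 := e1 x y
  have m1 := mul_add (A (n - 1)) (Sk (x ⊔ y) n) (Sk (x ⊓ y) n)
  have m2 := mul_add (A (n - 1)) (Sk x n) (Sk y n)
  linarith
end

section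
/- For every k ∈ [n], the Top-k norm on ℝ_{\geq 0}^n, defined as the sum of the k largest coordinates of x, is continuously submodular. -/
/-- The Top-k norm: the sum of the `k` largest coordinates. -/
noncomputable def topk {n : ℕ} (k : ℕ) (x : Fin n → ℝ) : ℝ :=
  ∑ i : Fin n, if (i : ℕ) < k then sortDesc x i else 0

/-!
The sum of the `k` largest entries has the variational description
`topk k x = min_t (k t + ∑ᵢ (xᵢ - t)₊)`, the minimum being attained at the `k`-th largest
entry of `x`. Let `t ≤ s` be optimal for `x` and `y` respectively, and bound
`topk k (x ⊔ y)` using the threshold `s` and `topk k (x ⊓ y)` using `t`. It then suffices that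
`(max a b - s)₊ + (min a b - t)₊ ≤ (a - t)₊ + (b - s)₊` coordinatewise: this is an equality
if `a ≤ b`, and otherwise follows from convexity of `u ↦ u₊`, since `(a - s, b - t)` is
majorized by `(a - t, b - s)`.
-/

noncomputable def topkThreshold {ι : Type*} [Fintype ι] (k : ℕ) (t : ℝ) (x : ι → ℝ) : ℝ :=
  k * t + ∑ i, max (x i - t) 0

lemma sortDesc_antitone {n : ℕ} (x : Fin n → ℝ) : Antitone (sortDesc x) :=
  fun _ _ hij => Tuple.monotone_sort x (Fin.rev_le_rev.mpr hij)

lemma sum_comp_sortDesc {n : ℕ} (x : Fin n → ℝ) (h : ℝ → ℝ) :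
    ∑ i, h (sortDesc x i) = ∑ i, h (x i) :=
  Equiv.sum_comp (Fin.revPerm.trans (Tuple.sort x)) (fun i => h (x i))

lemma sum_ite_val_lt_const {n k : ℕ} (hkn : k ≤ n) (t : ℝ) :
    ∑ i : Fin n, (if (i : ℕ) < k then t else 0) = k * t := by
  rw [Finset.sum_ite, Finset.sum_const_zero, add_zero, Finset.sum_const,
    Fin.card_filter_val_lt, min_eq_right hkn, nsmul_eq_mul]

lemma topkThreshold_eq_sum_sortDesc {n k : ℕ} (hkn : k ≤ n) (t : ℝ) (x : Fin n → ℝ) :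
    topkThreshold k t x =
      ∑ i : Fin n, ((if (i : ℕ) < k then t else 0) + max (sortDesc x i - t) 0) := by
  rw [topkThreshold, Finset.sum_add_distrib, sum_ite_val_lt_const hkn,
    sum_comp_sortDesc x (fun a => max (a - t) 0)]

lemma topk_le_topkThreshold {n k : ℕ} (hkn : k ≤ n) (t : ℝ) (x : Fin n → ℝ) :
    topk k x ≤ topkThreshold k t x := by
  rw [topkThreshold_eq_sum_sortDesc hkn]
  refine Finset.sum_le_sum fun i _ => ?_
  split_ifs
  · linarith [le_max_left (sortDesc x i - t) 0]
  · simp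

lemma topk_eq_topkThreshold {n k : ℕ} (x : Fin n → ℝ) (j : Fin n) (hj : (j : ℕ) + 1 = k) :
    topk k x = topkThreshold k (sortDesc x j) x := by
  rw [topkThreshold_eq_sum_sortDesc (by omega)]
  refine Finset.sum_congr rfl fun i _ => ?_
  split_ifs with hi
  · have : sortDesc x j ≤ sortDesc x i := sortDesc_antitone x (Fin.le_def.mpr (by omega))
    rw [max_eq_left (by linarith)]
    ring
  · have : sortDesc x i ≤ sortDesc x j := sortDesc_antitone x (Fin.le_def.mpr (by omega))
    rw [max_eq_right (by linarith)]
    ring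

lemma max_sub_add_min_sub_le {a b t s : ℝ} (hts : t ≤ s) :
    max (max a b - s) 0 + max (min a b - t) 0 ≤ max (a - t) 0 + max (b - s) 0 := by
  simp only [max_def, min_def]
  split_ifs <;> linarith

lemma topkThreshold_sup_add_inf_le {ι : Type*} [Fintype ι] (k : ℕ) {t s : ℝ} (hts : t ≤ s)
    (x y : ι → ℝ) :
    topkThreshold k s (x ⊔ y) + topkThreshold k t (x ⊓ y) ≤
      topkThreshold k t x + topkThreshold k s y := by
  have hsum := Finset.sum_le_sum fun i (_ : i ∈ Finset.univ) =>
    max_sub_add_min_sub_le (a := x i) (b := y i) hts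
  simp only [Finset.sum_add_distrib] at hsum
  simp only [topkThreshold, Pi.sup_apply, Pi.inf_apply]
  linarith

theorem topk_norm_submodular {n : ℕ} (k : ℕ) (hk : 1 ≤ k) (hkn : k ≤ n) :
    ContSubmodular (fun x : Fin n → ℝ => topk k x) := by
  intro x y hx hy
  obtain ⟨j, hj⟩ : ∃ j : Fin n, (j : ℕ) + 1 = k := ⟨⟨k - 1, by omega⟩, by simp; omega⟩
  wlog h : sortDesc x j ≤ sortDesc y j generalizing x y
  · have := this y x hy hx (le_of_not_ge h)
    rw [sup_comm, inf_comm] at this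
    linarith
  calc topk k (x ⊔ y) + topk k (x ⊓ y)
      ≤ topkThreshold k (sortDesc y j) (x ⊔ y) + topkThreshold k (sortDesc x j) (x ⊓ y) :=
        add_le_add (topk_le_topkThreshold hkn _ _) (topk_le_topkThreshold hkn _ _)
    _ ≤ topkThreshold k (sortDesc x j) x + topkThreshold k (sortDesc y j) y :=
        topkThreshold_sup_add_inf_le k h x y
    _ = topk k x + topk k y := by
        rw [← topk_eq_topkThreshold x j hj, ← topk_eq_topkThreshold y j hj]
end

section
/- Continuous submodularity is equivalent to pairwise submodularity: a function f : ℝ_{\geq 0}^n → ℝ_{\geq 0} satisfies f(x ∨ y) + f(x ∧ y) ≤ f(x) + f(y) for all x, y ≥ 0 if and only if for all x ∈ ℝ_{\geq 0}^n, all a, b ≥ 0, and all distinct indices i ≠ j, f(x) + f(x + a·e_i + b·e_j) ≤ f(x + a·e_i) + f(x + b·e_j). -/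
/-- Diminishing returns, derived from the pairwise condition. -/
lemma dimret {n : ℕ} (f : (Fin n → ℝ) → ℝ)
    (hp : ∀ x : Fin n → ℝ, (∀ i, 0 ≤ x i) → ∀ a b : ℝ, 0 ≤ a → 0 ≤ b →
        ∀ i j : Fin n, i ≠ j →
          f x + f (x + Pi.single i a + Pi.single j b) ≤
            f (x + Pi.single i a) + f (x + Pi.single j b)) :
    ∀ S : Finset (Fin n), ∀ x y : Fin n → ℝ, (∀ k, 0 ≤ x k) → (∀ k, x k ≤ y k) →
      (∀ k, k ∉ S → x k = y k) → ∀ i, i ∉ S → ∀ a : ℝ, 0 ≤ a →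
      f (y + Pi.single i a) + f x ≤ f y + f (x + Pi.single i a) := by
  intro S
  induction S using Finset.induction_on with
  | empty =>
    intro x y hx hxy hS i hi a ha
    have hxy' : x = y := funext fun k => hS k (Finset.notMem_empty k)
    rw [hxy']; linarith
  | @insert j S' hj ih =>
    intro x y hx hxy hS i hi a ha
    have hij : i ≠ j := by
      intro h; exact hi (h ▸ Finset.mem_insert_self j S')
    have hc : (0:ℝ) ≤ y j - x j := sub_nonneg.mpr (hxy j)
    have hx'app : ∀ k, ((x + Pi.single j (y j - x j) : Fin n → ℝ)) k
        = x k + (if k = j then y j - x j else 0) := by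
      intro k; simp [Pi.single_apply]
    have hx'nn : ∀ k, 0 ≤ ((x + Pi.single j (y j - x j) : Fin n → ℝ)) k := by
      intro k; rw [hx'app]
      by_cases h : k = j
      · rw [if_pos h]; subst h; linarith [hx k, hxy k]
      · rw [if_neg h]; simpa using hx k
    have hx'le : ∀ k, ((x + Pi.single j (y j - x j) : Fin n → ℝ)) k ≤ y k := by
      intro k; rw [hx'app]
      by_cases h : k = j
      · rw [if_pos h]; subst h; linarith
      · rw [if_neg h]; simpa using hxy k
    have hS' : ∀ k, k ∉ S' → ((x + Pi.single j (y j - x j) : Fin n → ℝ)) k = y k := by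
      intro k hk; rw [hx'app]
      by_cases h : k = j
      · rw [if_pos h]; subst h; ring
      · rw [if_neg h]
        have := hS k (by simp [h, hk])
        simpa using this
    have hiS' : i ∉ S' := fun h => hi (Finset.mem_insert_of_mem h)
    have IH := ih (x + Pi.single j (y j - x j)) y hx'nn hx'le hS' i hiS' a ha
    have hpw := hp x hx a (y j - x j) ha hc i j hij
    have hcomm : x + Pi.single j (y j - x j) + Pi.single i a
        = x + Pi.single i a + Pi.single j (y j - x j) := by
      rw [add_right_comm]
    rw [hcomm] at IH
    linarith

theorem submodular_iff_pairwise {n : ℕ} (f : (Fin n → ℝ) → ℝ) :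
    ContSubmodular f ↔
      ∀ x : Fin n → ℝ, (∀ i, 0 ≤ x i) → ∀ a b : ℝ, 0 ≤ a → 0 ≤ b →
        ∀ i j : Fin n, i ≠ j →
          f x + f (x + Pi.single i a + Pi.single j b) ≤
            f (x + Pi.single i a) + f (x + Pi.single j b) := by
  constructor
  · intro hsub x hx a b ha hb i j hij
    have hxa : ∀ k, 0 ≤ ((x + Pi.single i a : Fin n → ℝ)) k := by
      intro k; simp only [Pi.add_apply, Pi.single_apply]
      by_cases h : k = i
      · rw [if_pos h]; linarith [hx k]
      · rw [if_neg h]; simpa using hx k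
    have hxb : ∀ k, 0 ≤ ((x + Pi.single j b : Fin n → ℝ)) k := by
      intro k; simp only [Pi.add_apply, Pi.single_apply]
      by_cases h : k = j
      · rw [if_pos h]; linarith [hx k]
      · rw [if_neg h]; simpa using hx k
    have h1 : (x + Pi.single i a) ⊔ (x + Pi.single j b)
        = x + Pi.single i a + Pi.single j b := by
      funext k
      simp only [Pi.sup_apply, Pi.add_apply, Pi.single_apply]
      by_cases hki : k = i
      · rw [if_pos hki, if_neg (hki ▸ hij)]
        rw [sup_eq_left.mpr (by linarith : x k + 0 ≤ x k + a)]; ring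
      · by_cases hkj : k = j
        · rw [if_neg hki, if_pos hkj]
          rw [sup_eq_right.mpr (by linarith : x k + 0 ≤ x k + b)]; ring
        · rw [if_neg hki, if_neg hkj]
          simp
    have h2 : (x + Pi.single i a) ⊓ (x + Pi.single j b) = x := by
      funext k
      simp only [Pi.inf_apply, Pi.add_apply, Pi.single_apply]
      by_cases hki : k = i
      · rw [if_pos hki, if_neg (hki ▸ hij)]
        rw [inf_eq_right.mpr (by linarith)]; ring
      · by_cases hkj : k = j
        · rw [if_neg hki, if_pos hkj]
          rw [inf_eq_left.mpr (by linarith)]; ring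
        · rw [if_neg hki, if_neg hkj]; simp
    have := hsub (x + Pi.single i a) (x + Pi.single j b) hxa hxb
    rw [h1, h2] at this
    linarith
  · intro hp
    suffices H : ∀ S : Finset (Fin n), ∀ x y : Fin n → ℝ, (∀ k, 0 ≤ x k) →
        (∀ k, 0 ≤ y k) → (∀ k, k ∉ S → x k ≤ y k) →
        f (x ⊔ y) + f (x ⊓ y) ≤ f x + f y by
      intro x y hx hy
      exact H Finset.univ x y hx hy (fun k hk => absurd (Finset.mem_univ k) hk)
    intro S
    induction S using Finset.induction_on with
    | empty =>
      intro x y hx hy hS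
      have hle : x ≤ y := fun k => hS k (Finset.notMem_empty k)
      rw [sup_eq_right.mpr hle, inf_eq_left.mpr hle]; linarith
    | @insert j S' hj ih =>
      intro x y hx hy hS
      by_cases hcase : x j ≤ y j
      · exact ih x y hx hy (fun k hk => by
          by_cases h : k = j
          · rw [h]; exact hcase
          · exact hS k (by simp [h, hk]))
      · push_neg at hcase
        have ha : (0:ℝ) ≤ x j - y j := by linarith
        have hx'app : ∀ k, ((x + Pi.single j (y j - x j) : Fin n → ℝ)) k
            = x k + (if k = j then y j - x j else 0) := by
          intro k; simp [Pi.single_apply]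
        have hx'j : ((x + Pi.single j (y j - x j) : Fin n → ℝ)) j = y j := by
          rw [hx'app, if_pos rfl]; ring
        have hx'k : ∀ k, k ≠ j → ((x + Pi.single j (y j - x j) : Fin n → ℝ)) k = x k := by
          intro k hk; rw [hx'app, if_neg hk]; ring
        have hx'nn : ∀ k, 0 ≤ ((x + Pi.single j (y j - x j) : Fin n → ℝ)) k := by
          intro k
          by_cases h : k = j
          · rw [h, hx'j]; exact hy j
          · rw [hx'k k h]; exact hx k
        have hinf : (x + Pi.single j (y j - x j)) ⊓ y = x ⊓ y := by
          funext k
          simp only [Pi.inf_apply]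
          by_cases h : k = j
          · rw [h, hx'j]
            rw [inf_eq_left.mpr le_rfl, inf_eq_right.mpr (le_of_lt hcase)]
          · rw [hx'k k h]
        have hsup : x ⊔ y = ((x + Pi.single j (y j - x j)) ⊔ y)
            + Pi.single j (x j - y j) := by
          funext k
          simp only [Pi.sup_apply, Pi.add_apply, Pi.single_apply]
          by_cases h : k = j
          · rw [if_pos h, h]
            have e1 : x j + (y j - x j) = y j := by ring
            rw [e1, sup_eq_left.mpr (le_of_lt hcase), sup_eq_right.mpr le_rfl]
            simp
          · simp [h]
        have hx'eq : x = (x + Pi.single j (y j - x j)) + Pi.single j (x j - y j) := by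
          funext k
          simp only [Pi.add_apply, Pi.single_apply]
          by_cases h : k = j
          · rw [if_pos h, if_pos h, h]; ring
          · rw [if_neg h, if_neg h]; ring
        have hx'le : ∀ k, ((x + Pi.single j (y j - x j) : Fin n → ℝ)) k
            ≤ ((x + Pi.single j (y j - x j)) ⊔ y) k := fun k => le_sup_left
        have hdiff : ∀ k, k ∉ (Finset.univ.erase j) →
            ((x + Pi.single j (y j - x j) : Fin n → ℝ)) k = ((x + Pi.single j (y j - x j)) ⊔ y) k := by
          intro k hk
          have hkj : k = j := by
            by_contra h
            exact hk (Finset.mem_erase.mpr ⟨h, Finset.mem_univ k⟩)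
          rw [hkj, Pi.sup_apply, hx'j, sup_eq_right.mpr le_rfl]
        have hjnot : j ∉ Finset.univ.erase j := Finset.notMem_erase j _
        have hDR := dimret f hp (Finset.univ.erase j) (x + Pi.single j (y j - x j))
          ((x + Pi.single j (y j - x j)) ⊔ y) hx'nn hx'le hdiff j hjnot (x j - y j) ha
        rw [← hsup, ← hx'eq] at hDR
        have hIH := ih (x + Pi.single j (y j - x j)) y hx'nn hy (fun k hk => by
          by_cases h : k = j
          · rw [h, hx'j]
          · rw [hx'k k h]; exact hS k (by simp [h, hk]))
        rw [hinf] at hIH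
        linarith
end

section
/- Every DR-submodular norm is a weighted ℓ_1 norm: if ‖·‖ : ℝ_{\geq 0}^n → ℝ_{\geq 0} is a norm (restricted to the nonnegative orthant) satisfying the diminishing returns property ‖w + a·e_i‖ − ‖w‖ ≤ ‖x + a·e_i‖ − ‖x‖ for all x ≤ w coordinatewise, all indices i, and all a ≥ 0, and moreover ‖e_i‖ = 1 for all i, then ‖x‖ = Σ_i x_i for all x ∈ ℝ_{\geq 0}^n. -/
/-!
Along a ray `t ↦ x + t • eᵢ` with `x ≥ 0`, DR-submodularity makes the increments of the norm
over steps of length `a` non-increasing, so after `m` steps the norm has grown by at most `m`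
times the first increment; the reverse triangle inequality forces growth of at least `m a - ‖x‖`.
Letting `m → ∞` shows the first increment is `a`, i.e. `‖x + a eᵢ‖ = ‖x‖ + a`; adding the
coordinates of `x` one at a time gives `‖x‖ = ∑ xᵢ`.
-/

open Finset

theorem le_of_increments_le_of_linear_growth {g : ℕ → ℝ} {c d K : ℝ}
    (hinc : ∀ m : ℕ, g (m + 1) - g m ≤ d) (hlow : ∀ m : ℕ, m * c - K ≤ g m) : c ≤ d := by
  have hup : ∀ m : ℕ, g m ≤ g 0 + m * d := by
    intro m
    induction m with
    | zero => simp
    | succ m ih => push_cast; linarith [hinc m]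
  by_contra! hdc
  obtain ⟨m, hm⟩ := exists_nat_gt ((K + g 0) / (c - d))
  rw [div_lt_iff₀ (sub_pos.2 hdc)] at hm
  linarith [hup m, hlow m]

theorem Seminorm.map_add_smul_eq_of_increments_le {E : Type*} [AddCommGroup E] [Module ℝ E]
    (p : Seminorm ℝ E) {x v : E} {a : ℝ} (ha : 0 ≤ a)
    (hinc : ∀ m : ℕ, p (x + ((m + 1) * a) • v) - p (x + (m * a) • v) ≤ p (x + a • v) - p x) :
    p (x + a • v) = p x + a * p v := by
  have hray : ∀ t : ℝ, 0 ≤ t → p (t • v) = t * p v := fun t ht => by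
    rw [map_smul_eq_mul, Real.norm_of_nonneg ht]
  refine le_antisymm ((map_add_le_add p x _).trans_eq (by rw [hray a ha])) ?_
  have hlow : ∀ m : ℕ, m * (a * p v) - p x ≤ p (x + (m * a) • v) := by
    intro m
    have := map_sub_le_add p (x + (m * a) • v) x
    rw [add_sub_cancel_left, hray _ (by positivity)] at this
    linarith
  have := le_of_increments_le_of_linear_growth (g := fun m : ℕ => p (x + (m * a) • v))
    (fun m => by exact_mod_cast hinc m) hlow
  linarith

def IsDRSubmodular {ι : Type*} [DecidableEq ι] (f : (ι → ℝ) → ℝ) : Prop :=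
  ∀ x w : ι → ℝ, 0 ≤ x → x ≤ w → ∀ i : ι, ∀ a : ℝ, 0 ≤ a →
    f (w + Pi.single i a) - f w ≤ f (x + Pi.single i a) - f x

theorem IsDRSubmodular.map_add_single {ι : Type*} [DecidableEq ι] {p : Seminorm ℝ (ι → ℝ)}
    (hp : IsDRSubmodular p) {x : ι → ℝ} (hx : 0 ≤ x) {i : ι} (hi : p (Pi.single i 1) = 1)
    {a : ℝ} (ha : 0 ≤ a) : p (x + Pi.single i a) = p x + a := by
  have hsingle : ∀ t : ℝ, Pi.single i t = t • (Pi.single i 1 : ι → ℝ) := fun t => by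
    rw [← Pi.single_smul, smul_eq_mul, mul_one]
  rw [hsingle a, p.map_add_smul_eq_of_increments_le ha, hi, mul_one]
  intro m
  have hw : x ≤ x + (m * a) • Pi.single i 1 :=
    le_add_of_nonneg_right (by rw [← hsingle]; exact Pi.single_nonneg.2 (by positivity))
  have := hp x _ hx hw i a ha
  rwa [add_assoc, hsingle a, ← add_smul, ← add_one_mul] at this

theorem eq_sum_of_map_add_single {ι : Type*} [Fintype ι] [DecidableEq ι] {f : (ι → ℝ) → ℝ}
    (h0 : f 0 = 0)
    (hadd : ∀ y : ι → ℝ, 0 ≤ y → ∀ i a, 0 ≤ a → f (y + Pi.single i a) = f y + a)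
    {x : ι → ℝ} (hx : 0 ≤ x) : f x = ∑ i, x i := by
  suffices ∀ s : Finset ι, f (∑ i ∈ s, Pi.single i (x i)) = ∑ i ∈ s, x i by
    simpa [Finset.univ_sum_single] using this univ
  intro s
  induction s using Finset.induction_on with
  | empty => simpa using h0
  | insert j s hj ih =>
    have hpartial : 0 ≤ ∑ i ∈ s, Pi.single i (x i) :=
      sum_nonneg fun i _ => Pi.single_nonneg.2 (hx i)
    rw [sum_insert hj, sum_insert hj, add_comm, hadd _ hpartial j _ (hx j), ih, add_comm]

theorem dr_submodular_norm_is_l1 {n : ℕ} (f : (Fin n → ℝ) → ℝ)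
    (h_tri : ∀ x y : Fin n → ℝ, f (x + y) ≤ f x + f y)
    (h_hom : ∀ (c : ℝ) (x : Fin n → ℝ), f (c • x) = |c| * f x)
    (h_dr : ∀ x w : Fin n → ℝ, (∀ i, 0 ≤ x i) → x ≤ w →
      ∀ i : Fin n, ∀ a : ℝ, 0 ≤ a →
        f (w + Pi.single i a) - f w ≤ f (x + Pi.single i a) - f x)
    (h_unit : ∀ i : Fin n, f (Pi.single i 1) = 1) :
    ∀ x : Fin n → ℝ, (∀ i, 0 ≤ x i) → f x = ∑ i, x i := by
  let p : Seminorm ℝ (Fin n → ℝ) := Seminorm.of f h_tri (by simpa only [Real.norm_eq_abs])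
  have hp : IsDRSubmodular p := h_dr
  intro x hx
  exact eq_sum_of_map_add_single (map_zero p)
    (fun y hy i a ha => hp.map_add_single hy (h_unit i) ha) hx
end

section
/- The Lovász extension of a monotone submodular set function f : 2^{[n]} → ℝ_{\geq 0} with f(∅) = 0, defined by ‖x‖ := ∫_0^∞ f({j : x_j ≥ t}) dt, is continuously submodular on ℝ_{\geq 0}^n. -/
open MeasureTheory

/-- The Lovász extension `x ↦ ∫_0^∞ f({j : x_j ≥ t}) dt` of a set function `f`. -/
noncomputable def lovaszExtension {n : ℕ} (f : Finset (Fin n) → ℝ) (x : Fin n → ℝ) : ℝ :=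
  ∫ t in Set.Ioi (0 : ℝ), f (Finset.univ.filter fun j => t ≤ x j)

private lemma lovasz_integrable {n : ℕ} (f : Finset (Fin n) → ℝ)
    (h_empty : f ∅ = 0)
    (h_nonneg : ∀ S, 0 ≤ f S)
    (h_mono : ∀ A B : Finset (Fin n), A ⊆ B → f A ≤ f B)
    (x : Fin n → ℝ) :
    IntegrableOn (fun t : ℝ => f (Finset.univ.filter fun j => t ≤ x j))
      (Set.Ioi (0 : ℝ)) := by
  set g : ℝ → ℝ := fun t => f (Finset.univ.filter fun j => t ≤ x j) with hg
  have hanti : Antitone g := by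
    intro s t hst
    apply h_mono
    intro j hj
    simp only [Finset.mem_filter, Finset.mem_univ, true_and] at hj ⊢
    exact hst.trans hj
  set M : ℝ := ∑ i, max (x i) 0 with hM
  have hzero : ∀ t, M < t → g t = 0 := by
    intro t ht
    have : (Finset.univ.filter fun j => t ≤ x j) = ∅ := by
      apply Finset.filter_false_of_mem
      intro j _
      intro hle
      have h1 : x j ≤ M := by
        have := Finset.single_le_sum (f := fun i : Fin n => max (x i) 0)
          (fun i _ => le_max_right _ _) (Finset.mem_univ j)
        exact (le_max_left (x j) 0).trans this
      linarith
    simp only [hg, this, h_empty]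
  have hmeas : Measurable g := hanti.measurable
  have h1 : IntegrableOn g (Set.Ioc (0 : ℝ) M) := by
    apply Measure.integrableOn_of_bounded (M := f Finset.univ)
    · simp
    · exact hmeas.aestronglyMeasurable
    · filter_upwards with t
      rw [Real.norm_eq_abs, abs_of_nonneg (h_nonneg _)]
      exact h_mono _ _ (Finset.filter_subset _ _)
  have h2 : IntegrableOn g (Set.Ioi M) := by
    apply (integrableOn_zero (s := Set.Ioi M)).congr_fun _ measurableSet_Ioi
    intro t ht
    exact (hzero t ht).symm
  have := h1.union h2
  apply this.mono_set
  intro t ht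
  rcases le_or_gt t M with h | h
  · exact Or.inl ⟨ht, h⟩
  · exact Or.inr h

theorem lovasz_extension_submodular {n : ℕ} (f : Finset (Fin n) → ℝ)
    (h_empty : f ∅ = 0)
    (h_nonneg : ∀ S, 0 ≤ f S)
    (h_mono : ∀ A B : Finset (Fin n), A ⊆ B → f A ≤ f B)
    (h_sub : ∀ A B : Finset (Fin n), f (A ∪ B) + f (A ∩ B) ≤ f A + f B) :
    ContSubmodular (lovaszExtension f) := by
  intro x y _ _
  have hsupS : ∀ t : ℝ, (Finset.univ.filter fun j => t ≤ (x ⊔ y) j)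
      = (Finset.univ.filter fun j => t ≤ x j) ∪ (Finset.univ.filter fun j => t ≤ y j) := by
    intro t
    ext j
    simp [Pi.sup_apply, le_sup_iff, Finset.mem_union, Finset.mem_filter]
  have hinfS : ∀ t : ℝ, (Finset.univ.filter fun j => t ≤ (x ⊓ y) j)
      = (Finset.univ.filter fun j => t ≤ x j) ∩ (Finset.univ.filter fun j => t ≤ y j) := by
    intro t
    ext j
    simp [Pi.inf_apply, le_inf_iff, Finset.mem_inter, Finset.mem_filter, and_assoc]
  have Ix := lovasz_integrable f h_empty h_nonneg h_mono x
  have Iy := lovasz_integrable f h_empty h_nonneg h_mono y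
  have Isup := lovasz_integrable f h_empty h_nonneg h_mono (x ⊔ y)
  have Iinf := lovasz_integrable f h_empty h_nonneg h_mono (x ⊓ y)
  unfold lovaszExtension
  rw [← integral_add Isup Iinf, ← integral_add Ix Iy]
  apply integral_mono (Isup.add Iinf) (Ix.add Iy)
  intro t
  simp only [Pi.add_apply, hsupS t, hinfS t]
  exact h_sub _ _
end

section
/- Let n be even, A = {1,...,n/2}, B = {n/2+1,...,n}, and define the submodular norm ‖x‖' := max_{i ∈ A} x_i + Σ_{i ∈ B} x_i. Then any symmetric norm ‖·‖ satisfying ‖x‖ ≤ ‖x‖' for all x ∈ ℝ_{\geq 0}^n must satisfy ‖𝟙_B‖' ≥ (n/2)·‖𝟙_B‖. -/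
/-- The asymmetric submodular norm `‖x‖' = max_{i ∈ A} x_i + Σ_{i ∈ B} x_i`,
where `A` is the first half of coordinates and `B` the second half. -/
noncomputable def halfMaxHalfSum {m : ℕ} (x : Fin m ⊕ Fin m → ℝ) : ℝ :=
  (⨆ i : Fin m, x (Sum.inl i)) + ∑ i : Fin m, x (Sum.inr i)

/-- The indicator vector of the second half `B` of coordinates. -/
def indB {m : ℕ} : Fin m ⊕ Fin m → ℝ :=
  Sum.elim (fun _ => 0) (fun _ => 1)

theorem symmetric_far_from_asymmetric_submodular {m : ℕ} (hm : 0 < m)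
    (f : (Fin m ⊕ Fin m → ℝ) → ℝ)
    (h_tri : ∀ x y, f (x + y) ≤ f x + f y)
    (h_hom : ∀ (c : ℝ) x, f (c • x) = |c| * f x)
    (h_sym : ∀ (σ : Equiv.Perm (Fin m ⊕ Fin m)) (x : Fin m ⊕ Fin m → ℝ), f (x ∘ σ) = f x)
    (h_dom : ∀ x : Fin m ⊕ Fin m → ℝ, (∀ i, 0 ≤ x i) → f x ≤ halfMaxHalfSum x) :
    (m : ℝ) * f indB ≤ halfMaxHalfSum (indB (m := m)) := by
  haveI : Nonempty (Fin m) := ⟨⟨0, hm⟩⟩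
  have hB : halfMaxHalfSum (indB (m := m)) = (m : ℝ) := by
    simp [halfMaxHalfSum, indB, ciSup_const]
  rw [hB]
  have key : f indB ≤ 1 := by
    have hswap : (indB (m := m)) ∘ (Equiv.sumComm (Fin m) (Fin m)) =
        Sum.elim (fun _ => (1 : ℝ)) (fun _ => 0) := by
      funext i; cases i <;> simp [indB]
    have h1 : f (indB (m := m)) = f (Sum.elim (fun _ => (1 : ℝ)) (fun _ => 0)) := by
      rw [← hswap, h_sym]
    rw [h1]
    have := h_dom (Sum.elim (fun _ => (1 : ℝ)) (fun _ => 0)) (by intro i; cases i <;> simp)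
    calc f (Sum.elim (fun _ => (1 : ℝ)) (fun _ => 0)) ≤ _ := this
      _ = 1 := by simp [halfMaxHalfSum, ciSup_const]
  calc (m : ℝ) * f indB ≤ (m : ℝ) * 1 := by
        apply mul_le_mul_of_nonneg_left key (by positivity)
    _ = m := mul_one _
end
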